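/- arXiv:math/0506611 — 2 statements merged into one kernel-verified Lean document; each statement's English description precedes it below -/
import Mathlib

section
/- The orbit of e_0 − e_1 under the Weyl group W_6 consists exactly of the following 27 classes: e_0 − e_i for 1 ≤ i ≤ 6; 2e_0 − e_i − e_j − e_k − e_l for distinct 1 ≤ i < j < k < l ≤ 6; and 3e_0 − 2e_i − (sum of e_j over all j ≠ i with 1 ≤ j ≤ 6) for 1 ≤ i ≤ 6. -/
/-- The intersection form on the divisor class lattice `L = Fin 7 → ℤ`:
`⟨x, y⟩ = x₀y₀ − x₁y₁ − ⋯ − x₆y₆`. -/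
def form (x y : Fin 7 → ℤ) : ℤ :=
  x 0 * y 0 - x 1 * y 1 - x 2 * y 2 - x 3 * y 3 - x 4 * y 4 - x 5 * y 5 - x 6 * y 6

/-- The standard basis vectors `e 0, …, e 6` of `L`. -/
def e (i : Fin 7) : Fin 7 → ℤ := fun j => if j = i then 1 else 0

/-- The anticanonical class `κ = 3e₀ − e₁ − ⋯ − e₆`. -/
def kappa : Fin 7 → ℤ := (3 : ℤ) • e 0 - e 1 - e 2 - e 3 - e 4 - e 5 - e 6

/-- The simple roots `r₀ = e₀ − e₁ − e₂ − e₃` and `rᵢ = eᵢ − e_{i+1}` for `1 ≤ i ≤ 5`. -/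
def r : Fin 6 → (Fin 7 → ℤ) :=
  ![e 0 - e 1 - e 2 - e 3, e 1 - e 2, e 2 - e 3, e 3 - e 4, e 4 - e 5, e 5 - e 6]

lemma form_add_left (x y v : Fin 7 → ℤ) : form (x + y) v = form x v + form y v := by
  simp only [form, Pi.add_apply]; ring

lemma form_smul_left (c : ℤ) (x v : Fin 7 → ℤ) : form (c • x) v = c * form x v := by
  simp only [form, Pi.smul_apply, smul_eq_mul]; ring

/-- The reflection `x ↦ x + ⟨x, v⟩·v` as a ℤ-linear map. -/
def reflMap (v : Fin 7 → ℤ) : (Fin 7 → ℤ) →ₗ[ℤ] (Fin 7 → ℤ) where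
  toFun x := x + form x v • v
  map_add' x y := by
    funext j
    simp only [form, Pi.add_apply, Pi.smul_apply, smul_eq_mul]
    ring
  map_smul' c x := by
    funext j
    simp only [form, Pi.add_apply, Pi.smul_apply, smul_eq_mul, RingHom.id_apply]
    ring

lemma reflMap_invol (v : Fin 7 → ℤ) (hv : form v v = -2) (x : Fin 7 → ℤ) :
    reflMap v (reflMap v x) = x := by
  show (x + form x v • v) + form (x + form x v • v) v • v = x
  rw [form_add_left, form_smul_left, hv]
  module

/-- The reflection `sᵢ(x) = x + ⟨x, rᵢ⟩·rᵢ` through the simple root `rᵢ`,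
as a ℤ-linear automorphism of `L`. -/
def s (i : Fin 6) : (Fin 7 → ℤ) ≃ₗ[ℤ] (Fin 7 → ℤ) :=
  LinearEquiv.ofLinear (reflMap (r i)) (reflMap (r i))
    (LinearMap.ext fun x => reflMap_invol (r i) (by fin_cases i <;> decide) x)
    (LinearMap.ext fun x => reflMap_invol (r i) (by fin_cases i <;> decide) x)

/-- The Weyl group `W₆`: the subgroup of the group of ℤ-linear automorphisms of `L`
generated by the reflections `s₀, …, s₅`. -/
def W6 : Subgroup ((Fin 7 → ℤ) ≃ₗ[ℤ] (Fin 7 → ℤ)) :=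
  Subgroup.closure (Set.range s)

/-- The sum `e₁ + e₂ + e₃ + e₄ + e₅ + e₆`. -/
def sumE : Fin 7 → ℤ := e 1 + e 2 + e 3 + e 4 + e 5 + e 6

/-!
The 27 classes form a finite set containing `e₀ − e₁` and mapped into itself by every simple
reflection, hence stable under `W₆`. Conversely, a class of the set other than `e₀ − e₁` pairs
negatively with some simple root `rᵢ`, and reflecting in `rᵢ` keeps it in the set while lowering
its height `⟨·, ρ⟩`; descending along such reflections therefore reaches `e₀ − e₁`.
-/

open MulAction Pointwise

theorem Finset.subset_orbit_of_descent {G α β : Type*} [Group G] [MulAction G α] [LinearOrder β]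
    (T : Finset α) (f : α → β) {a : α}
    (h : ∀ y ∈ T, y ≠ a → ∃ g : G, g • y ∈ T ∧ f (g • y) < f y) :
    (T : Set α) ⊆ orbit G a := by
  classical
  by_contra! hbad
  obtain ⟨y, hyT, hyO⟩ := Set.not_subset.1 hbad
  obtain ⟨z, hz, hmin⟩ :=
    (T.filter (· ∉ orbit G a)).exists_min_image f ⟨y, Finset.mem_filter.2 ⟨hyT, hyO⟩⟩
  rw [Finset.mem_filter] at hz
  obtain ⟨g, hgz, hlt⟩ := h z hz.1 fun hza => hz.2 (hza ▸ mem_orbit_self z)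
  have hgz_orbit : g • z ∈ orbit G a := by
    by_contra hn
    exact (hmin _ (Finset.mem_filter.2 ⟨hgz, hn⟩)).not_gt hlt
  rw [← orbit_eq_iff, orbit_smul, orbit_eq_iff] at hgz_orbit
  exact hz.2 hgz_orbit

def conicClasses : Finset (Fin 7 → ℤ) :=
  ((Finset.univ.filter fun i : Fin 7 => 0 < i).image fun i => e 0 - e i) ∪
  ((Finset.univ.filter fun q : Fin 7 × Fin 7 × Fin 7 × Fin 7 =>
      0 < q.1 ∧ q.1 < q.2.1 ∧ q.2.1 < q.2.2.1 ∧ q.2.2.1 < q.2.2.2).image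
    fun q => (2 : ℤ) • e 0 - e q.1 - e q.2.1 - e q.2.2.1 - e q.2.2.2) ∪
  ((Finset.univ.filter fun i : Fin 7 => 0 < i).image fun i => (3 : ℤ) • e 0 - sumE - e i)

theorem mem_conicClasses {x : Fin 7 → ℤ} :
    x ∈ conicClasses ↔
      ((∃ i : Fin 7, 0 < i ∧ x = e 0 - e i) ∨
       (∃ i j k l : Fin 7, 0 < i ∧ i < j ∧ j < k ∧ k < l ∧
          x = (2 : ℤ) • e 0 - e i - e j - e k - e l) ∨
       (∃ i : Fin 7, 0 < i ∧ x = (3 : ℤ) • e 0 - sumE - e i)) := by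
  simp only [conicClasses, Finset.mem_union, Finset.mem_image, Finset.mem_filter,
    Finset.mem_univ, true_and, Prod.exists, and_assoc, eq_comm (a := x), or_assoc]

theorem e0_sub_e1_mem_conicClasses : e 0 - e 1 ∈ conicClasses :=
  mem_conicClasses.2 <| Or.inl ⟨1, by decide, rfl⟩

theorem s_mul_self (i : Fin 6) : s i * s i = 1 :=
  LinearEquiv.ext fun x => reflMap_invol (r i) (by fin_cases i <;> decide) x

set_option maxRecDepth 100000 in
theorem s_apply_mem_conicClasses : ∀ i : Fin 6, ∀ x ∈ conicClasses, s i x ∈ conicClasses := by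
  decide

theorem s_mem_stabilizer_conicClasses (i : Fin 6) :
    s i ∈ stabilizer _ (conicClasses : Set (Fin 7 → ℤ)) := by
  have hsub : s i • (conicClasses : Set (Fin 7 → ℤ)) ⊆ conicClasses := by
    rintro _ ⟨x, hx, rfl⟩
    exact s_apply_mem_conicClasses i x hx
  refine mem_stabilizer_iff.2 (hsub.antisymm ?_)
  calc (conicClasses : Set (Fin 7 → ℤ))
      = (s i * s i) • (conicClasses : Set (Fin 7 → ℤ)) := by rw [s_mul_self, one_smul]
    _ = s i • s i • (conicClasses : Set (Fin 7 → ℤ)) := mul_smul _ _ _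
    _ ⊆ s i • (conicClasses : Set (Fin 7 → ℤ)) := Set.smul_set_mono hsub

theorem W6_le_stabilizer_conicClasses : W6 ≤ stabilizer _ (conicClasses : Set (Fin 7 → ℤ)) :=
  Subgroup.closure_le _ |>.2 <| Set.range_subset_iff.2 s_mem_stabilizer_conicClasses

/-- Pairs to `1` with every simple root, so `⟨sᵢ x, rho⟩ = ⟨x, rho⟩ + ⟨x, rᵢ⟩`. -/
def rho : Fin 7 → ℤ := ![16, -6, -5, -4, -3, -2, -1]

theorem form_s_rho (i : Fin 6) (x : Fin 7 → ℤ) : form (s i x) rho = form x rho + form x (r i) := by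
  have hr : form (r i) rho = 1 := by fin_cases i <;> decide
  change form (x + form x (r i) • r i) rho = _
  rw [form_add_left, form_smul_left, hr, mul_one]

set_option maxRecDepth 100000 in
theorem exists_form_r_neg_of_mem_conicClasses :
    ∀ x ∈ conicClasses, x ≠ e 0 - e 1 → ∃ i : Fin 6, form x (r i) < 0 := by
  decide

theorem conicClasses_subset_orbit : (conicClasses : Set (Fin 7 → ℤ)) ⊆ orbit W6 (e 0 - e 1) := by
  refine conicClasses.subset_orbit_of_descent (form · rho) fun x hx hx1 => ?_
  obtain ⟨i, hi⟩ := exists_form_r_neg_of_mem_conicClasses x hx hx1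
  refine ⟨⟨s i, Subgroup.subset_closure ⟨i, rfl⟩⟩, s_apply_mem_conicClasses i x hx, ?_⟩
  change form (s i x) rho < form x rho
  rw [form_s_rho]
  omega

/-- The `W₆`-orbit of `e₀ − e₁` consists of the 27 classes `e₀ − eᵢ`,
`2e₀ − eᵢ − eⱼ − e_k − e_l`, and `3e₀ − 2eᵢ − ∑_{j ≠ i} eⱼ`. -/
theorem statement_6 (x : Fin 7 → ℤ) :
    (∃ w ∈ W6, w (e 0 - e 1) = x) ↔
      ((∃ i : Fin 7, 0 < i ∧ x = e 0 - e i) ∨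
       (∃ i j k l : Fin 7, 0 < i ∧ i < j ∧ j < k ∧ k < l ∧
          x = (2 : ℤ) • e 0 - e i - e j - e k - e l) ∨
       (∃ i : Fin 7, 0 < i ∧ x = (3 : ℤ) • e 0 - sumE - e i)) := by
  rw [← mem_conicClasses]
  constructor
  · rintro ⟨w, hw, rfl⟩
    rw [← Finset.mem_coe, ← mem_stabilizer_iff.1 (W6_le_stabilizer_conicClasses hw)]
    exact Set.smul_mem_smul_set e0_sub_e1_mem_conicClasses
  · intro hx
    obtain ⟨⟨w, hw⟩, rfl⟩ := mem_orbit_iff.1 (conicClasses_subset_orbit hx)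
    exact ⟨w, hw, rfl⟩
end

section
/- The set of roots in L is a single orbit of the Weyl group W_6: an element x of L is a root if and only if there exists w ∈ W_6 with w(e_1 − e_2) = x. -/
/-!
Every root is `W₆`-conjugate to the lowest root `-2e₀ + e₁ + ⋯ + e₆`. The height
`13x₀ + 5x₁ + 4x₂ + 3x₃ + 2x₄ + x₅` takes the value `1` on every simple root, so `sᵢ` changes
the height of `x` by `⟨x, rᵢ⟩`. A root with some `⟨x, rᵢ⟩ < 0` therefore has a reflection
lowering its height, and heights of roots are bounded below since the coordinates of a root
lie in `[-2, 2]` (Cauchy–Schwarz on `x₁ + ⋯ + x₆ = -3x₀`). The descent stops at a root with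
`⟨x, rᵢ⟩ ≥ 0` for all `i`, and an elementary computation shows that this is the lowest root.
Applied to `x` and to `e₁ − e₂`, this puts both in the orbit of the lowest root.
-/

def IsRoot (x : Fin 7 → ℤ) : Prop := form x x = -2 ∧ form x kappa = 0

def lowestRoot : Fin 7 → ℤ := ![-2, 1, 1, 1, 1, 1, 1]

def height (x : Fin 7 → ℤ) : ℤ := 13 * x 0 + 5 * x 1 + 4 * x 2 + 3 * x 3 + 2 * x 4 + x 5

lemma form_comm (x y : Fin 7 → ℤ) : form x y = form y x := by
  unfold form; ring

lemma form_add_right (x y v : Fin 7 → ℤ) : form v (x + y) = form v x + form v y := by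
  rw [form_comm, form_add_left, form_comm x, form_comm y]

lemma form_smul_right (c : ℤ) (x v : Fin 7 → ℤ) : form v (c • x) = c * form v x := by
  rw [form_comm, form_smul_left, form_comm x]

lemma form_kappa (x : Fin 7 → ℤ) :
    form x kappa = 3 * x 0 + x 1 + x 2 + x 3 + x 4 + x 5 + x 6 := by
  simp only [form, kappa, e, Pi.sub_apply, Pi.smul_apply, smul_eq_mul, Fin.reduceEq, ↓reduceIte]
  ring

lemma reflMap_apply (v x : Fin 7 → ℤ) : reflMap v x = x + form x v • v := rfl

lemma form_reflMap {v : Fin 7 → ℤ} (hv : form v v = -2) (a b : Fin 7 → ℤ) :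
    form (reflMap v a) (reflMap v b) = form a b := by
  simp only [reflMap_apply, form_add_left, form_add_right, form_smul_left, form_smul_right, hv,
    form_comm v b]
  ring

lemma reflMap_of_form_eq_zero {v y : Fin 7 → ℤ} (h : form y v = 0) : reflMap v y = y := by
  rw [reflMap_apply, h, zero_smul, add_zero]

lemma s_apply (i : Fin 6) (x : Fin 7 → ℤ) : s i x = x + form x (r i) • r i := rfl

lemma s_mem_W6 (i : Fin 6) : s i ∈ W6 := Subgroup.subset_closure ⟨i, rfl⟩

lemma form_r_self (i : Fin 6) : form (r i) (r i) = -2 := by fin_cases i <;> decide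

lemma form_kappa_r (i : Fin 6) : form kappa (r i) = 0 := by fin_cases i <;> decide

def kappaIsometries : Subgroup ((Fin 7 → ℤ) ≃ₗ[ℤ] (Fin 7 → ℤ)) where
  carrier := {w | w kappa = kappa ∧ ∀ a b, form (w a) (w b) = form a b}
  mul_mem' {u v} hu hv := ⟨by simp [hv.1, hu.1], fun a b => by simp [hu.2, hv.2]⟩
  one_mem' := ⟨rfl, fun _ _ => rfl⟩
  inv_mem' {u} hu := by
    refine ⟨?_, fun a b => ?_⟩
    · exact u.symm_apply_eq.mpr hu.1.symm
    · simpa using (hu.2 (u.symm a) (u.symm b)).symm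

lemma W6_le_kappaIsometries : W6 ≤ kappaIsometries := by
  refine (Subgroup.closure_le _).mpr ?_
  rintro _ ⟨i, rfl⟩
  exact ⟨reflMap_of_form_eq_zero (form_kappa_r i), form_reflMap (form_r_self i)⟩

lemma IsRoot.map {x : Fin 7 → ℤ} (hx : IsRoot x) {w : (Fin 7 → ℤ) ≃ₗ[ℤ] (Fin 7 → ℤ)}
    (hw : w ∈ W6) : IsRoot (w x) := by
  obtain ⟨hκ, hform⟩ := W6_le_kappaIsometries hw
  exact ⟨(hform x x).trans hx.1, by rw [← hκ, hform, hx.2]⟩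

lemma isRoot_e_one_sub_e_two : IsRoot (e 1 - e 2) := ⟨by decide, by decide⟩

lemma abs_le_two_of_isRoot {x : Fin 7 → ℤ} (hx : IsRoot x) (j : Fin 7) : |x j| ≤ 2 := by
  obtain ⟨hnorm, hκ⟩ := hx
  simp only [form] at hnorm
  rw [form_kappa] at hκ
  have hsum : x 1 + x 2 + x 3 + x 4 + x 5 + x 6 = -3 * x 0 := by linarith
  have hsq : (x 1 + x 2 + x 3 + x 4 + x 5 + x 6) * (x 1 + x 2 + x 3 + x 4 + x 5 + x 6) =
      9 * (x 0 * x 0) := by rw [hsum]; ring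
  -- Cauchy–Schwarz: `(x₁ + ⋯ + x₆)² ≤ 6 (x₁² + ⋯ + x₆²) = 6 (x₀² + 2)`
  have h0 : x 0 * x 0 ≤ 4 := by
    linarith [sq_nonneg (x 1 - x 2), sq_nonneg (x 1 - x 3), sq_nonneg (x 1 - x 4),
      sq_nonneg (x 1 - x 5), sq_nonneg (x 1 - x 6), sq_nonneg (x 2 - x 3), sq_nonneg (x 2 - x 4),
      sq_nonneg (x 2 - x 5), sq_nonneg (x 2 - x 6), sq_nonneg (x 3 - x 4), sq_nonneg (x 3 - x 5),
      sq_nonneg (x 3 - x 6), sq_nonneg (x 4 - x 5), sq_nonneg (x 4 - x 6), sq_nonneg (x 5 - x 6)]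
  have hj : x j * x j ≤ 6 := by
    fin_cases j <;> simp only [Fin.zero_eta, Fin.mk_one, Fin.reduceFinMk] <;>
      linarith [mul_self_nonneg (x 1), mul_self_nonneg (x 2), mul_self_nonneg (x 3),
        mul_self_nonneg (x 4), mul_self_nonneg (x 5), mul_self_nonneg (x 6)]
  rw [abs_le]
  constructor <;> nlinarith only [hj]

lemma height_add_smul (x v : Fin 7 → ℤ) (c : ℤ) :
    height (x + c • v) = height x + c * height v := by
  simp only [height, Pi.add_apply, Pi.smul_apply, smul_eq_mul]; ring

lemma height_r (i : Fin 6) : height (r i) = 1 := by fin_cases i <;> decide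

lemma height_s (i : Fin 6) (x : Fin 7 → ℤ) : height (s i x) = height x + form x (r i) := by
  rw [s_apply, height_add_smul, height_r, mul_one]

lemma neg_56_le_height_of_isRoot {x : Fin 7 → ℤ} (hx : IsRoot x) : -56 ≤ height x := by
  have h := fun j => (abs_le.mp (abs_le_two_of_isRoot hx j)).1
  simp only [height]
  linarith [h 0, h 1, h 2, h 3, h 4, h 5]

lemma Int.zero_le_and_le_one_of_sq_eq_self {t : ℤ} (h : t ^ 2 = t) : 0 ≤ t ∧ t ≤ 1 := by
  constructor <;> nlinarith [Int.le_self_sq t]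

lemma forall_form_r_nonneg_iff (x : Fin 7 → ℤ) :
    (∀ i, 0 ≤ form x (r i)) ↔ 0 ≤ x 0 + x 1 + x 2 + x 3 ∧ x 1 ≤ x 2 ∧ x 2 ≤ x 3 ∧
      x 3 ≤ x 4 ∧ x 4 ≤ x 5 ∧ x 5 ≤ x 6 := by
  simp only [Fin.forall_fin_succ, r, Matrix.cons_val_zero, Matrix.cons_val_succ, form, e,
    Pi.sub_apply, Fin.reduceEq, ↓reduceIte, Fin.isValue, IsEmpty.forall_iff, and_true]
  omega

lemma eq_lowestRoot_of_forall_form_r_nonneg {x : Fin 7 → ℤ} (hx : IsRoot x)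
    (hdom : ∀ i, 0 ≤ form x (r i)) : x = lowestRoot := by
  have hx0 := (abs_le.mp (abs_le_two_of_isRoot hx 0)).1
  obtain ⟨hnorm, hκ⟩ := hx
  simp only [form] at hnorm
  rw [form_kappa] at hκ
  obtain ⟨h0, h1, h2, h3, h4, h5⟩ := (forall_form_r_nonneg_iff x).mp hdom
  -- `x₁ + x₂ + x₃ ≤ x₄ + x₅ + x₆` and `x₁ + x₂ + x₃ ≥ -x₀` force `x₀ ≤ 0`; `x₀ = 0` forces `x = 0`
  have hne : x 0 ≠ 0 := by
    intro hzero
    obtain ⟨h1, h2, h3, h4, h5, h6⟩ :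
        x 1 = 0 ∧ x 2 = 0 ∧ x 3 = 0 ∧ x 4 = 0 ∧ x 5 = 0 ∧ x 6 = 0 := by omega
    simp [hzero, h1, h2, h3, h4, h5, h6] at hnorm
  -- Hence `x₀ ∈ {-1, -2}`, so `∑ xᵢ (xᵢ - 1) = (x₀ + 1)(x₀ + 2) = 0` forces every `xᵢ ∈ {0, 1}`
  have hsum : x 1 ^ 2 + x 2 ^ 2 + x 3 ^ 2 + x 4 ^ 2 + x 5 ^ 2 + x 6 ^ 2 =
      x 1 + x 2 + x 3 + x 4 + x 5 + x 6 := by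
    obtain h | h : x 0 = -1 ∨ x 0 = -2 := by omega
    all_goals rw [h] at hnorm hκ; linarith
  have hle := fun j => Int.le_self_sq (x j)
  obtain ⟨hsq1, hsq2, hsq3, hsq4, hsq5, hsq6⟩ : x 1 ^ 2 = x 1 ∧ x 2 ^ 2 = x 2 ∧ x 3 ^ 2 = x 3 ∧
      x 4 ^ 2 = x 4 ∧ x 5 ^ 2 = x 5 ∧ x 6 ^ 2 = x 6 := by
    refine ⟨?_, ?_, ?_, ?_, ?_, ?_⟩ <;> linarith [hle 1, hle 2, hle 3, hle 4, hle 5, hle 6]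
  have := Int.zero_le_and_le_one_of_sq_eq_self hsq1
  have := Int.zero_le_and_le_one_of_sq_eq_self hsq2
  have := Int.zero_le_and_le_one_of_sq_eq_self hsq3
  have := Int.zero_le_and_le_one_of_sq_eq_self hsq4
  have := Int.zero_le_and_le_one_of_sq_eq_self hsq5
  have := Int.zero_le_and_le_one_of_sq_eq_self hsq6
  obtain ⟨hx0, hx1, hx2, hx3, hx4, hx5, hx6⟩ :
      x 0 = -2 ∧ x 1 = 1 ∧ x 2 = 1 ∧ x 3 = 1 ∧ x 4 = 1 ∧ x 5 = 1 ∧ x 6 = 1 := by omega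
  funext j
  fin_cases j <;> simp [lowestRoot, hx0, hx1, hx2, hx3, hx4, hx5, hx6]

lemma exists_form_r_neg_of_ne_lowestRoot {x : Fin 7 → ℤ} (hx : IsRoot x)
    (hne : x ≠ lowestRoot) : ∃ i, form x (r i) < 0 := by
  by_contra! h
  exact hne (eq_lowestRoot_of_forall_form_r_nonneg hx h)

theorem exists_mem_W6_apply_eq_lowestRoot {x : Fin 7 → ℤ} (hx : IsRoot x) :
    ∃ w ∈ W6, w x = lowestRoot := by
  by_cases hne : x = lowestRoot
  · exact ⟨1, one_mem _, hne⟩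
  obtain ⟨i, hi⟩ := exists_form_r_neg_of_ne_lowestRoot hx hne
  obtain ⟨w, hw, hwx⟩ := exists_mem_W6_apply_eq_lowestRoot (hx.map (s_mem_W6 i))
  exact ⟨w * s i, mul_mem hw (s_mem_W6 i), hwx⟩
termination_by (height x + 56).toNat
decreasing_by
  have := neg_56_le_height_of_isRoot hx
  have := neg_56_le_height_of_isRoot (hx.map (s_mem_W6 i))
  rw [height_s] at *
  omega

/-- The set of roots is a single `W₆`-orbit: `x` is a root iff `x = w(e₁ − e₂)`
for some `w ∈ W₆`. -/
theorem statement_14 (x : Fin 7 → ℤ) :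
    (form x x = -2 ∧ form x kappa = 0) ↔ ∃ w ∈ W6, w (e 1 - e 2) = x := by
  refine ⟨fun hx => ?_, ?_⟩
  · obtain ⟨u, hu, hux⟩ := exists_mem_W6_apply_eq_lowestRoot hx
    obtain ⟨v, hv, hve⟩ := exists_mem_W6_apply_eq_lowestRoot isRoot_e_one_sub_e_two
    refine ⟨u⁻¹ * v, mul_mem (inv_mem hu) hv, ?_⟩
    rw [LinearEquiv.mul_apply, hve, ← hux]
    exact u.symm_apply_apply x
  · rintro ⟨w, hw, rfl⟩
    exact isRoot_e_one_sub_e_two.map hw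
end
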